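/- arXiv:1202.6556 — 2 statements merged into one kernel-verified Lean document; each statement's English description precedes it below -/
import Mathlib

section
/- Let G be a graph, C a longest cycle, and P = x→y a longest path in G∖C of length p̄. If ξ and ξ' are two vertices of N_C(x) ∪ N_C(y) that are consecutive on C and at least one of ξ, ξ' lies in N_C(x) ∩ N_C(y), then the arc of C from ξ to ξ' has length at least p̄ + 2. -/
open SimpleGraph

namespace ToughPaper

variable {V : Type*}

/-- Number of connected components of the subgraph induced on the complement of `S`. -/
noncomputable def numComp (G : SimpleGraph V) (S : Set V) : ℕ :=
  Nat.card (G.induce Sᶜ).ConnectedComponent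

/-- The toughness of `G` is greater than 1: `|S| > s(G∖S)` for every cutset `S`. -/
def ToughGtOne [Fintype V] (G : SimpleGraph V) : Prop :=
  ∀ S : Finset V, 1 < numComp G ↑S → numComp G ↑S < S.card

/-- The toughness of `G` is at most 1: some cutset `S` has `|S| ≤ s(G∖S)`. -/
def ToughLeOne [Fintype V] (G : SimpleGraph V) : Prop :=
  ∃ S : Finset V, 1 < numComp G ↑S ∧ S.card ≤ numComp G ↑S

/-- `G` is `k`-connected: more than `k` vertices and no cutset of size `< k`. -/
def KConnected [Fintype V] (k : ℕ) (G : SimpleGraph V) : Prop :=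
  k < Fintype.card V ∧ ∀ S : Finset V, S.card < k → (G.induce (↑S : Set V)ᶜ).Connected

/-- The (vertex) connectivity `κ(G)`. -/
noncomputable def conn [Fintype V] (G : SimpleGraph V) : ℕ :=
  sSup {k | KConnected k G}

/-- `C` is a longest cycle in `G`. -/
def IsLongestCycle (G : SimpleGraph V) {v : V} (C : G.Walk v v) : Prop :=
  C.IsCycle ∧ ∀ (u : V) (D : G.Walk u u), D.IsCycle → D.length ≤ C.length

/-- `P` is a longest path among paths of `G` avoiding the vertex list `W`
(i.e. a longest path of `G ∖ W`). -/
def IsLongestPathOff (G : SimpleGraph V) (W : List V) {x y : V} (P : G.Walk x y) : Prop :=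
  P.IsPath ∧ (∀ u ∈ P.support, u ∉ W) ∧
  ∀ (a b : V) (Q : G.Walk a b), Q.IsPath → (∀ u ∈ Q.support, u ∉ W) → Q.length ≤ P.length

/-- The neighbors of `x` lying on the vertex list `W` (e.g. `N_C(x)` for `W = C.support`). -/
def nbrsOn (G : SimpleGraph V) (W : List V) (x : V) : Set V :=
  {u | u ∈ W ∧ G.Adj x u}

/-- The number of edges of the oriented arc of the closed walk `C` from `a` to `b`. -/
noncomputable def arcLen [DecidableEq V] {G : SimpleGraph V} {v : V}
    (C : G.Walk v v) (a b : V) : ℕ :=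
  if h : ∃ (ha : a ∈ C.support), b ∈ (C.rotate a ha).support then
    ((C.rotate a h.choose).takeUntil b h.choose_spec).length
  else 0

/-- The vertices of the oriented arc of `C` from `a` to `b`. -/
noncomputable def arcSupport [DecidableEq V] {G : SimpleGraph V} {v : V}
    (C : G.Walk v v) (a b : V) : List V :=
  if h : ∃ (ha : a ∈ C.support), b ∈ (C.rotate a ha).support then
    ((C.rotate a h.choose).takeUntil b h.choose_spec).support
  else []

/-- The successor of `a` on the oriented closed walk `C`. -/
noncomputable def cycSucc [DecidableEq V] {G : SimpleGraph V} {v : V}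
    (C : G.Walk v v) (a : V) : V :=
  if h : a ∈ C.support then (C.rotate a h).getVert 1 else a

/-- The predecessor of `a` on the oriented closed walk `C`. -/
noncomputable def cycPred [DecidableEq V] {G : SimpleGraph V} {v : V}
    (C : G.Walk v v) (a : V) : V :=
  if h : a ∈ C.support then (C.rotate a h).getVert ((C.rotate a h).length - 1) else a

/-- `a` and `b` are consecutive elements of `N` on `C`; the arc `a→b` is then an
elementary segment created by `N`. -/
def ConsecOnC [DecidableEq V] {G : SimpleGraph V} {v : V}
    (C : G.Walk v v) (N : Set V) (a b : V) : Prop :=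
  a ∈ N ∧ b ∈ N ∧ a ≠ b ∧ ∀ w ∈ arcSupport C a b, w ≠ a → w ≠ b → w ∉ N

/-- `u` is an interior vertex of the arc `a→b` of `C`. -/
def InteriorArc [DecidableEq V] {G : SimpleGraph V} {v : V}
    (C : G.Walk v v) (a b : V) (u : V) : Prop :=
  u ∈ arcSupport C a b ∧ u ≠ a ∧ u ≠ b

/-- `L` is an intermediate path between the elementary segments `a₁→b₁` and `a₂→b₂`
(created by `N` on `C`), relative to the path with vertex list `Psupp`. -/
def IsInterPath [DecidableEq V] (G : SimpleGraph V) {v z w : V} (C : G.Walk v v)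
    (Psupp : List V) (N : Set V) (a₁ b₁ a₂ b₂ : V) (L : G.Walk z w) : Prop :=
  ConsecOnC C N a₁ b₁ ∧ ConsecOnC C N a₂ b₂ ∧ a₁ ≠ a₂ ∧
  L.IsPath ∧ 0 < L.length ∧ InteriorArc C a₁ b₁ z ∧ InteriorArc C a₂ b₂ w ∧
  ∀ u ∈ L.support, (u ∈ C.support ∨ u ∈ Psupp) → u = z ∨ u = w

/-- Vertex type of the Petersen graph: 2-element subsets of a 5-element set. -/
def PetersenV := {s : Finset (Fin 5) // s.card = 2}

instance : Fintype PetersenV := inferInstanceAs (Fintype {s : Finset (Fin 5) // s.card = 2})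
instance : DecidableEq PetersenV := inferInstanceAs (DecidableEq {s : Finset (Fin 5) // s.card = 2})

/-- The Petersen graph as the Kneser graph `K(5,2)`. -/
def petersen : SimpleGraph PetersenV where
  Adj a b := Disjoint a.1 b.1 ∧ a ≠ b
  symm := ⟨fun a b h => ⟨h.1.symm, h.2.symm⟩⟩
  loopless := ⟨fun a h => h.2 rfl⟩

instance : DecidableRel petersen.Adj :=
  fun a b => inferInstanceAs (Decidable (Disjoint a.1 b.1 ∧ a ≠ b))


/-!
Let `D` be the rest of `C` once the arc `ξ → ξ'` is removed, a path `ξ' → ξ`. Since one of `ξ, ξ'`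
is adjacent to both ends of `P`, the ends of `P` can be attached to `ξ` and `ξ'` in some order,
and `D` closed up through `P` is a cycle of length `|C| - arcLen C ξ ξ' + p̄ + 2`. Maximality
of `C` gives the bound.
-/

lemma isCycle_append_cons_concat {G : SimpleGraph V} {a b x y : V} {D : G.Walk a b}
    {Q : G.Walk x y} (hD : D.IsPath) (hQ : Q.IsPath) (hDQ : D.support.Disjoint Q.support)
    (hab : a ≠ b) (hbx : G.Adj b x) (hya : G.Adj y a) :
    (D.append (.cons hbx (Q.concat hya))).IsCycle := by
  have haQ : a ∉ Q.support := hDQ D.start_mem_support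
  have hbQ : b ∉ Q.support := hDQ D.end_mem_support
  have haD : a ∉ D.support.tail := by
    have := hD.support_nodup
    rw [← Walk.cons_tail_support] at this
    exact (List.nodup_cons.1 this).1
  refine hD.isCycle_append ?_ ?_ (by simp)
  · refine (Walk.cons_isPath_iff _ _).2 ⟨hQ.concat haQ hya, ?_⟩
    simp [Walk.support_concat, hbQ, hab.symm]
  · intro u huD huQ
    simp only [Walk.support_cons, List.tail_cons, Walk.support_concat,
      List.mem_append, List.mem_singleton] at huQ
    rcases huQ with huQ | rfl
    · exact hDQ (List.mem_of_mem_tail huD) huQ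
    · exact haD huD

lemma IsLongestCycle.length_add_length_add_two_le {G : SimpleGraph V} {v a b x y : V}
    {C : G.Walk v v} (hC : IsLongestCycle G C) {D : G.Walk a b} (hD : D.IsPath)
    (hDC : ∀ u ∈ D.support, u ∈ C.support) {Q : G.Walk x y} (hQ : Q.IsPath)
    (hQC : ∀ u ∈ Q.support, u ∉ C.support) (hab : a ≠ b) (hbx : G.Adj b x) (hya : G.Adj y a) :
    D.length + Q.length + 2 ≤ C.length := by
  have hcycle := isCycle_append_cons_concat hD hQ (fun u hu hu' => hQC u hu' (hDC u hu))
    hab hbx hya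
  simpa [Walk.length_append, Walk.length_concat, add_assoc] using hC.2 a _ hcycle

lemma exists_isPath_arcLen_add_length_eq [DecidableEq V] {G : SimpleGraph V} {v a b : V}
    {C : G.Walk v v} (hC : C.IsCycle) (ha : a ∈ C.support) (hb : b ∈ C.support) (hab : a ≠ b) :
    ∃ D : G.Walk b a, D.IsPath ∧ (∀ u ∈ D.support, u ∈ C.support) ∧
      arcLen C a b + D.length = C.length := by
  have hb' : b ∈ (C.rotate a ha).support := (Walk.mem_support_rotate_iff ..).2 hb
  have harc : arcLen C a b = ((C.rotate a ha).takeUntil b hb').length := by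
    rw [arcLen, dif_pos ⟨ha, hb'⟩]
  refine ⟨(C.rotate a ha).dropUntil b hb', ?_, fun u hu => ?_, ?_⟩
  · refine Walk.IsCycle.isPath_of_append_right
      (p := (C.rotate a ha).takeUntil b hb') (Walk.not_nil_of_ne hab) ?_
    rw [Walk.take_spec]
    exact hC.rotate ha
  · exact (Walk.mem_support_rotate_iff ..).1 (Walk.support_dropUntil_subset_support _ _ hu)
  · rw [harc, ← Walk.length_append, Walk.take_spec, Walk.length_rotate]

lemma mem_and_mem_or_mem_and_mem_of_mem_inter {α : Type*} {s t : Set α} {a b : α}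
    (ha : a ∈ s ∪ t) (hb : b ∈ s ∪ t) (h : a ∈ s ∩ t ∨ b ∈ s ∩ t) :
    a ∈ s ∧ b ∈ t ∨ a ∈ t ∧ b ∈ s := by
  simp only [Set.mem_union, Set.mem_inter_iff] at *
  tauto

theorem segment_at_common_neighbor_general {V : Type*} [DecidableEq V]
    (G : SimpleGraph V) {v x y ξ ξ' : V}
    (C : G.Walk v v) (P : G.Walk x y)
    (hC : IsLongestCycle G C) (hP : IsLongestPathOff G C.support P)
    (hcons : ConsecOnC C (nbrsOn G C.support x ∪ nbrsOn G C.support y) ξ ξ')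
    (hcommon : ξ ∈ nbrsOn G C.support x ∩ nbrsOn G C.support y ∨
      ξ' ∈ nbrsOn G C.support x ∩ nbrsOn G C.support y) :
    P.length + 2 ≤ arcLen C ξ ξ' := by
  obtain ⟨hξ, hξ', hne, -⟩ := hcons
  have hξC : ξ ∈ C.support := by rcases hξ with h | h <;> exact h.1
  have hξ'C : ξ' ∈ C.support := by rcases hξ' with h | h <;> exact h.1
  obtain ⟨D, hD, hDC, hlen⟩ := exists_isPath_arcLen_add_length_eq hC.1 hξC hξ'C hne
  rcases mem_and_mem_or_mem_and_mem_of_mem_inter hξ hξ' hcommon with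
    ⟨⟨-, hxξ⟩, -, hyξ'⟩ | ⟨⟨-, hyξ⟩, -, hxξ'⟩
  · have := hC.length_add_length_add_two_le hD hDC hP.1 hP.2.1 hne.symm hxξ.symm hyξ'
    omega
  · have := hC.length_add_length_add_two_le hD hDC hP.1.reverse
      (by simpa [Walk.support_reverse] using hP.2.1) hne.symm hyξ.symm hxξ'
    rw [Walk.length_reverse] at this
    omega

/-- If `ξ, ξ'` are consecutive vertices of `N_C(x) ∪ N_C(y)` on the longest cycle `C`
(where `P = x→y` is a longest path in `G ∖ C` of length `p̄`) and at least one of them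
lies in `N_C(x) ∩ N_C(y)`, then the arc of `C` from `ξ` to `ξ'` has length at least
`p̄ + 2`. -/
theorem segment_at_common_neighbor {V : Type*} [Fintype V] [DecidableEq V]
    (G : SimpleGraph V) {v x y ξ ξ' : V}
    (C : G.Walk v v) (P : G.Walk x y)
    (hC : IsLongestCycle G C) (hP : IsLongestPathOff G C.support P)
    (hcons : ConsecOnC C (nbrsOn G C.support x ∪ nbrsOn G C.support y) ξ ξ')
    (hcommon : ξ ∈ nbrsOn G C.support x ∩ nbrsOn G C.support y ∨
      ξ' ∈ nbrsOn G C.support x ∩ nbrsOn G C.support y) :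
    P.length + 2 ≤ arcLen C ξ ξ' :=
  segment_at_common_neighbor_general G C P hC hP hcons hcommon

end ToughPaper
end

section
/- Let G be a graph, C a longest cycle in G, and P = x₁→x₂ a longest path in G∖C with N_C(x₁) = N_C(x₂). Let ξ_a, ξ_b be two distinct common neighbors on C, with elementary segments I_a, I_b. If y is an interior vertex of I_a and z is an interior vertex of I_b such that |ξ_a→y| + |ξ_b→z| ≤ p̄ + 2 (arc lengths along the orientation of C, where p̄ is the length of P), then yz ∉ E(G). -/
open SimpleGraph

namespace ToughPaper

variable {V : Type*}

/-!
Since the segments are elementary, walking around `C` from `ξa` one meets `y` before `ξb`, and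
walking from `ξb` one meets `z` before `ξa`. So if `yz` were an edge, the cycle that goes from `ξa`
along `P` to `ξb`, back against the orientation of `C` to `y`, across `yz`, and on along `C` from
`z` to `ξa` would replace the arcs `ξa → y` and `ξb → z` of `C` by `P` and three edges. Its length
`|C| - |ξa → y| - |ξb → z| + p̄ + 3` exceeds `|C|`.
-/

theorem _root_.List.IsRotated.eq_of_nodup_of_head? {α : Type*} {l l' : List α} (h : l ~r l')
    (hl : l.Nodup) (hhead : l.head? = l'.head?) : l = l' := by
  obtain ⟨n, rfl⟩ := h
  rcases eq_or_ne l [] with rfl | hne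
  · simp
  have hlen : 0 < l.length := List.length_pos_of_ne_nil hne
  rw [← List.rotate_mod, List.head?_rotate (Nat.mod_lt _ hlen), List.head?_eq_getElem?] at hhead
  have : n % l.length = 0 := by
    rw [List.getElem?_eq_getElem hlen, List.getElem?_eq_getElem (Nat.mod_lt _ hlen),
      Option.some_inj, hl.getElem_inj_iff] at hhead
    exact hhead.symm
  rw [← List.rotate_mod, this, List.rotate_zero]

theorem _root_.List.IsRotated.eq_of_nodup_of_getLast? {α : Type*} {l l' : List α} (h : l ~r l')
    (hl : l.Nodup) (hlast : l.getLast? = l'.getLast?) : l = l' := by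
  rw [← List.reverse_inj]
  refine h.reverse.eq_of_nodup_of_head? (List.nodup_reverse.2 hl) ?_
  simpa [List.head?_reverse] using hlast

section Walks

open SimpleGraph.Walk

variable {G : SimpleGraph V}

theorem _root_.SimpleGraph.Walk.getLast?_tail_support {u v : V} {p : G.Walk u v}
    (hp : ¬ p.Nil) : p.support.tail.getLast? = some v := by
  cases p with
  | nil => exact absurd .nil hp
  | cons h p => simp [List.getLast?_eq_some_getLast]

lemma _root_.SimpleGraph.Walk.IsPath.isCycle_cons {u v : V} {p : G.Walk v u} (hp : p.IsPath)
    (h : G.Adj u v) (hlen : 2 ≤ p.length) : (cons h p).IsCycle := by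
  rw [isCycle_iff_isPath_tail_and_le_length]
  simp only [tail_cons, length_cons]
  exact ⟨by simpa using hp, by omega⟩

lemma _root_.SimpleGraph.Walk.IsCycle.nodup_reverse_support_append_support {u y b z : V}
    {A : G.Walk u y} {B : G.Walk y b} {D : G.Walk b z} {E : G.Walk z u}
    (hc : ((A.append B).append (D.append E)).IsCycle) (hA : ¬ A.Nil) (hD : ¬ D.Nil) :
    (B.support.reverse ++ E.support).Nodup := by
  have key : (B.support ++ E.support).Sublist
      ((A.support.tail ++ B.support.tail) ++ (D.support.tail ++ E.support.tail)) := by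
    rw [← B.cons_tail_support, ← E.cons_tail_support]
    exact ((List.singleton_sublist.2 (end_mem_tail_support hA)).append (List.Sublist.refl _)).append
      ((List.singleton_sublist.2 (end_mem_tail_support hD)).append (List.Sublist.refl _))
  have hnd := hc.support_nodup
  simp only [tail_support_append] at hnd
  exact ((List.reverse_perm _).append_right _).nodup_iff.2 (key.nodup hnd)

lemma _root_.SimpleGraph.Walk.IsCycle.isCycle_splice {u y b z x₁ x₂ : V} {A : G.Walk u y}
    {B : G.Walk y b} {D : G.Walk b z} {E : G.Walk z u}
    (hc : ((A.append B).append (D.append E)).IsCycle) (hA : ¬ A.Nil) (hD : ¬ D.Nil)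
    {P : G.Walk x₁ x₂} (hP : P.IsPath)
    (hPc : ∀ w ∈ P.support, w ∉ ((A.append B).append (D.append E)).support)
    (h₁ : G.Adj u x₁) (h₂ : G.Adj x₂ b) (hyz : G.Adj y z) :
    (cons h₁ (P.append (cons h₂ (B.reverse.append (cons hyz E))))).IsCycle := by
  refine IsPath.isCycle_cons ?_ h₁ (by simp; omega)
  rw [isPath_def, support_append, support_cons, List.tail_cons, support_append, support_reverse,
    support_cons, List.tail_cons]
  refine List.nodup_append.2 ⟨hP.support_nodup, hc.nodup_reverse_support_append_support hA hD, ?_⟩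
  rintro w hw _ hw' rfl
  refine hPc w hw ?_
  simp only [List.mem_append, List.mem_reverse, mem_support_append_iff] at hw' ⊢
  tauto

variable [DecidableEq V]

theorem _root_.SimpleGraph.Walk.mem_support_takeUntil_or_mem_support_takeUntil {u v x w : V}
    (p : G.Walk u v) (hx : x ∈ p.support) (hw : w ∈ p.support) :
    x ∈ (p.takeUntil w hw).support ∨ w ∈ (p.takeUntil x hx).support := by
  rcases List.prefix_or_prefix_of_prefix (p.support_takeUntil_prefix_support hx)
    (p.support_takeUntil_prefix_support hw) with h | h
  · exact .inl (h.subset (end_mem_support _))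
  · exact .inr (h.subset (end_mem_support _))

theorem _root_.SimpleGraph.Walk.IsCycle.rotate_rotate {v a b : V} {c : G.Walk v v}
    (hc : c.IsCycle) (ha : a ∈ c.support) (hb : b ∈ (c.rotate a ha).support) :
    (c.rotate a ha).rotate b hb = c.rotate b ((c.mem_support_rotate_iff a ha).1 hb) := by
  have hR := hc.rotate ha
  apply ext_support
  rw [← cons_tail_support, ← cons_tail_support (c.rotate b _)]
  congr 1
  refine (((support_rotate _ _ _).trans (support_rotate _ _ _)).trans
    (support_rotate _ _ _).symm).eq_of_nodup_of_getLast? (hR.rotate hb).support_nodup ?_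
  rw [getLast?_tail_support (hR.rotate hb).not_nil, getLast?_tail_support (hc.rotate _).not_nil]

end Walks

section Arcs

open SimpleGraph.Walk

variable [DecidableEq V] {G : SimpleGraph V} {v : V} {C : G.Walk v v}

theorem arcSupport_eq_of_rotate_eq {a b : V} (ha : a ∈ C.support) {R : G.Walk a a}
    (hR : C.rotate a ha = R) (hb : b ∈ R.support) :
    arcSupport C a b = (R.takeUntil b hb).support := by
  subst hR
  rw [arcSupport, dif_pos ⟨ha, hb⟩]

theorem arcLen_eq_of_rotate_eq {a b : V} (ha : a ∈ C.support) {R : G.Walk a a}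
    (hR : C.rotate a ha = R) (hb : b ∈ R.support) :
    arcLen C a b = (R.takeUntil b hb).length := by
  subst hR
  rw [arcLen, dif_pos ⟨ha, hb⟩]

theorem exists_of_mem_arcSupport {a b w : V} (hw : w ∈ arcSupport C a b) :
    ∃ ha : a ∈ C.support, b ∈ (C.rotate a ha).support := by
  unfold arcSupport at hw
  split_ifs at hw with h
  exacts [h, absurd hw List.not_mem_nil]

theorem mem_arcSupport_of_consecOnC {N : Set V} {a a' b y : V} (haa' : ConsecOnC C N a a')
    (hy : InteriorArc C a a' y) (hbN : b ∈ N) (hb : b ∈ C.support) (hba : b ≠ a) :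
    y ∈ arcSupport C a b := by
  obtain ⟨ha, ha'⟩ := exists_of_mem_arcSupport hy.1
  set R := C.rotate a ha
  have hyA : y ∈ (R.takeUntil a' ha').support := arcSupport_eq_of_rotate_eq ha rfl ha' ▸ hy.1
  have hyR := R.support_takeUntil_subset_support ha' hyA
  have hbR : b ∈ R.support := (C.mem_support_rotate_iff a ha).2 hb
  rw [arcSupport_eq_of_rotate_eq ha rfl hbR]
  refine (mem_support_takeUntil_or_mem_support_takeUntil R hbR hyR).resolve_left fun hby => ?_
  have hb_eq : b = a' := by
    by_contra hba'
    refine haa'.2.2.2 b ?_ hba hba' hbN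
    rw [arcSupport_eq_of_rotate_eq ha rfl ha']
    rw [← takeUntil_takeUntil R ha' hyA] at hby
    exact (R.takeUntil a' ha').support_takeUntil_subset_support hyA hby
  subst hb_eq
  exact notMem_support_takeUntil_support_takeUntil_subset hy.2.2.symm hyR hby hyA

theorem exists_arc_decomposition (hC : C.IsCycle) {a b y z : V} (ha : a ∈ C.support)
    (hb : b ∈ C.support) (hy : y ∈ arcSupport C a b) (hz : z ∈ arcSupport C b a) :
    ∃ (A : G.Walk a y) (B : G.Walk y b) (D : G.Walk b z) (E : G.Walk z a),
      (A.append B).append (D.append E) = C.rotate a ha ∧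
        arcLen C a y = A.length ∧ arcLen C b z = D.length := by
  set R := C.rotate a ha
  have hbR : b ∈ R.support := (C.mem_support_rotate_iff a ha).2 hb
  set K := R.takeUntil b hbR
  set L := R.dropUntil b hbR
  have hRKL : C.rotate a ha = K.append L := (R.take_spec hbR).symm
  have hSLK : C.rotate b hb = L.append K := (hC.rotate_rotate ha hbR).symm
  have hyK : y ∈ K.support := arcSupport_eq_of_rotate_eq ha rfl hbR ▸ hy
  have hzL : z ∈ L.support := by
    rw [arcSupport_eq_of_rotate_eq hb hSLK (by simp),
      takeUntil_append_of_mem_left _ _ (by simp)] at hz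
    exact L.support_takeUntil_subset_support _ hz
  refine ⟨K.takeUntil y hyK, K.dropUntil y hyK, L.takeUntil z hzL, L.dropUntil z hzL,
    by rw [take_spec, take_spec]; exact hRKL.symm, ?_, ?_⟩
  · rw [arcLen_eq_of_rotate_eq ha hRKL (by simp [hyK]), takeUntil_append_of_mem_left _ _ hyK]
  · rw [arcLen_eq_of_rotate_eq hb hSLK (by simp [hzL]), takeUntil_append_of_mem_left _ _ hzL]

end Arcs

theorem claim1_general {V : Type*} [DecidableEq V]
    (G : SimpleGraph V) {v x₁ x₂ ξa ξa' ξb ξb' y z : V}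
    (C : G.Walk v v) (P : G.Walk x₁ x₂)
    (hC : IsLongestCycle G C) (hP : IsLongestPathOff G C.support P)
    (hN : nbrsOn G C.support x₁ = nbrsOn G C.support x₂)
    (ha : ConsecOnC C (nbrsOn G C.support x₁) ξa ξa')
    (hb : ConsecOnC C (nbrsOn G C.support x₁) ξb ξb')
    (hab : ξa ≠ ξb)
    (hy : InteriorArc C ξa ξa' y) (hz : InteriorArc C ξb ξb' z)
    (hlen : arcLen C ξa y + arcLen C ξb z ≤ P.length + 2) :
    ¬ G.Adj y z := by
  intro hyz
  obtain ⟨A, B, D, E, hsplit, hA, hD⟩ := exists_arc_decomposition hC.1 ha.1.1 hb.1.1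
    (mem_arcSupport_of_consecOnC ha hy hb.1 hb.1.1 hab.symm)
    (mem_arcSupport_of_consecOnC hb hz ha.1 ha.1.1 hab)
  have hP_off : ∀ w ∈ P.support, w ∉ ((A.append B).append (D.append E)).support := by
    rw [hsplit]
    exact fun w hw hwC => hP.2.1 w hw ((C.mem_support_rotate_iff _ _).1 hwC)
  have hlonger := hC.2 _ _ <| (hsplit ▸ hC.1.rotate ha.1.1).isCycle_splice
    (Walk.not_nil_of_ne hy.2.1.symm) (Walk.not_nil_of_ne hz.2.1.symm) hP.1 hP_off
    ha.1.2.symm (hN ▸ hb.1).2 hyz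
  have hClen := congrArg Walk.length hsplit
  simp only [Walk.length_append, Walk.length_rotate, Walk.length_cons,
    Walk.length_reverse] at hlonger hClen
  omega

/-- **Claim 1.** Let `C` be a longest cycle, `P = x₁→x₂` a longest path in `G ∖ C` of
length `p̄`, with `N_C(x₁) = N_C(x₂)`. Let `I_a = ξ_a→ξ_a'` and `I_b = ξ_b→ξ_b'` be
distinct elementary segments, `y` interior to `I_a` and `z` interior to `I_b`. If
`|ξ_a→y| + |ξ_b→z| ≤ p̄ + 2`, then `yz ∉ E(G)`. -/
theorem claim1 {V : Type*} [Fintype V] [DecidableEq V]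
    (G : SimpleGraph V) {v x₁ x₂ ξa ξa' ξb ξb' y z : V}
    (C : G.Walk v v) (P : G.Walk x₁ x₂)
    (hC : IsLongestCycle G C) (hP : IsLongestPathOff G C.support P)
    (hN : nbrsOn G C.support x₁ = nbrsOn G C.support x₂)
    (ha : ConsecOnC C (nbrsOn G C.support x₁) ξa ξa')
    (hb : ConsecOnC C (nbrsOn G C.support x₁) ξb ξb')
    (hab : ξa ≠ ξb)
    (hy : InteriorArc C ξa ξa' y) (hz : InteriorArc C ξb ξb' z)
    (hlen : arcLen C ξa y + arcLen C ξb z ≤ P.length + 2) :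
    ¬ G.Adj y z :=
  claim1_general G C P hC hP hN ha hb hab hy hz hlen

end ToughPaper
end
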